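/- For x ∈ ℝ^d and v ∈ S^{d−1}, the un-normalized Hermite tensor satisfies He_k(x)[v^{⊗(k−1)}] = x · He_{k−1}(x·v) − (k−1) v · He_{k−2}(x·v), where He_k(x) := ((−1)^k/γ_d(x)) ∇^k γ_d(x) and He_j on the right-hand side are the univariate Hermite polynomials. -/

import Mathlib

/-!
Along a unit vector `v` the Gaussian satisfies `∂_v γ_d(y) = -(y·v) γ_d(y)`, so by the Hermite
recurrence `He_{n+1}(t) = t He_n(t) - He_n'(t)` and `He_n' = n He_{n-1}` an induction gives
`∇^n γ_d(y)[v^{⊗n}] = (-1)^n He_n(y·v) γ_d(y)`. One more derivative, in an arbitrary direction `w`,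
yields `(-1)^n (n (v·w) He_{n-1}(x·v) - (x·w) He_n(x·v)) γ_d(x)`, which is the claim with `k = n + 1`.
-/

/-- The un-normalized probabilist's Hermite polynomial `He_k` evaluated at `z`. -/
noncomputable def He (k : ℕ) (z : ℝ) : ℝ := Polynomial.aeval z (Polynomial.hermite k)

/-- The standard Gaussian density on `ℝ^d`. -/
noncomputable def gaussDensity (d : ℕ) (y : Fin d → ℝ) : ℝ :=
  Real.exp (-(∑ i, (y i) ^ 2) / 2) / (2 * Real.pi) ^ ((d : ℝ) / 2)

open Polynomial ContinuousLinearMap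

theorem Polynomial.derivative_hermite_succ (n : ℕ) :
    derivative (hermite (n + 1)) = (n + 1) • hermite n := by
  induction n with
  | zero => simp
  | succ n ih =>
    rw [hermite_succ (n + 1), ih, derivative_sub, derivative_mul, derivative_X, one_mul,
      derivative_smul, ih, mul_smul_comm, add_sub_assoc, ← smul_sub, ← hermite_succ n, succ_nsmul]
    simp only [nsmul_eq_mul]
    push_cast
    ring

/- For `n = 0` the junk value `He (0 - 1) = He 0` is harmless: it is multiplied by `n = 0`. -/
theorem aeval_derivative_hermite (n : ℕ) (t : ℝ) :
    aeval t (derivative (hermite n)) = n * He (n - 1) t := by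
  cases n with
  | zero => simp
  | succ n => rw [derivative_hermite_succ]; simp [He]

theorem hasDerivAt_He (n : ℕ) (t : ℝ) : HasDerivAt (He n) (n * He (n - 1) t) t := by
  rw [← aeval_derivative_hermite]
  exact (hermite n).hasDerivAt_aeval t

theorem He_succ (n : ℕ) (t : ℝ) : He (n + 1) t = t * He n t - n * He (n - 1) t := by
  simp only [He, hermite_succ, map_sub, map_mul, aeval_X, aeval_derivative_hermite]

theorem iteratedFDeriv_succ_apply_cons {𝕜 E F : Type*} [NontriviallyNormedField 𝕜]
    [NormedAddCommGroup E] [NormedSpace 𝕜 E] [NormedAddCommGroup F] [NormedSpace 𝕜 F]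
    {n : ℕ} {f : E → F} (hf : ContDiff 𝕜 (n + 1) f) (x w : E) (m : Fin n → E) :
    iteratedFDeriv 𝕜 (n + 1) f x (Fin.cons w m)
      = fderiv 𝕜 (fun y ↦ iteratedFDeriv 𝕜 n f y m) x w := by
  have hdiff : Differentiable 𝕜 (iteratedFDeriv 𝕜 n f) :=
    hf.differentiable_iteratedFDeriv (by exact_mod_cast Nat.lt_succ_self n)
  rw [iteratedFDeriv_succ_apply_left, Fin.cons_zero, Fin.tail_cons,
    fderiv_continuousMultilinear_apply_const_apply (hdiff x)]

section Gaussian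

variable {d : ℕ}

noncomputable def dotProductCLM (u : Fin d → ℝ) : (Fin d → ℝ) →L[ℝ] ℝ :=
  LinearMap.toContinuousLinearMap (dotProductBilin ℝ ℝ u)

@[simp] theorem dotProductCLM_apply (u w : Fin d → ℝ) : dotProductCLM u w = u ⬝ᵥ w := rfl

theorem hasFDerivAt_dotProduct_const (u y : Fin d → ℝ) :
    HasFDerivAt (fun z ↦ z ⬝ᵥ u) (dotProductCLM u) y := by
  convert (dotProductCLM u).hasFDerivAt (x := y) using 1
  exact funext fun z ↦ dotProduct_comm z u

theorem gaussDensity_pos (y : Fin d → ℝ) : 0 < gaussDensity d y := by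
  unfold gaussDensity; positivity

theorem contDiff_gaussDensity {n : WithTop ℕ∞} : ContDiff ℝ n (gaussDensity d) := by
  unfold gaussDensity; fun_prop

theorem hasFDerivAt_gaussDensity (y : Fin d → ℝ) :
    HasFDerivAt (gaussDensity d) (-gaussDensity d y • dotProductCLM y) y := by
  have hq : HasFDerivAt (fun z : Fin d → ℝ ↦ ∑ i, z i ^ 2) ((2 : ℝ) • dotProductCLM y) y := by
    refine (HasFDerivAt.fun_sum fun i _ ↦ (hasFDerivAt_apply i y).pow 2).congr_fderiv ?_
    ext w
    simp [dotProduct, Finset.mul_sum, mul_assoc]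
  have hγ : gaussDensity d = fun z ↦
      Real.exp (-(1 / 2 : ℝ) * ∑ i, z i ^ 2) * ((2 * Real.pi) ^ ((d : ℝ) / 2))⁻¹ := by
    funext z; rw [gaussDensity, div_eq_mul_inv]; ring_nf
  rw [hγ]
  refine ((hq.const_mul _).exp.mul_const _).congr_fderiv ?_
  ext w
  simp only [smul_apply, dotProductCLM_apply, smul_eq_mul]
  ring

theorem hasFDerivAt_He_dotProduct_mul_gaussDensity (n : ℕ) (v y : Fin d → ℝ) :
    HasFDerivAt (fun z ↦ He n (z ⬝ᵥ v) * gaussDensity d z)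
      (gaussDensity d y • ((n * He (n - 1) (y ⬝ᵥ v)) • dotProductCLM v
        - He n (y ⬝ᵥ v) • dotProductCLM y)) y := by
  refine (((hasDerivAt_He n _).comp_hasFDerivAt y (hasFDerivAt_dotProduct_const v y)).mul
    (hasFDerivAt_gaussDensity y)).congr_fderiv ?_
  ext w
  simp only [add_apply, sub_apply, smul_apply, dotProductCLM_apply, smul_eq_mul, Function.comp_apply]
  ring

theorem iteratedFDeriv_gaussDensity_apply_const {v : Fin d → ℝ} (hv : v ⬝ᵥ v = 1) (n : ℕ)
    (y : Fin d → ℝ) :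
    iteratedFDeriv ℝ n (gaussDensity d) y (fun _ ↦ v)
      = (-1) ^ n * (He n (y ⬝ᵥ v) * gaussDensity d y) := by
  induction n generalizing y with
  | zero => simp [He]
  | succ n ih =>
    rw [show (fun _ ↦ v : Fin (n + 1) → _) = Fin.cons v fun _ ↦ v from (Fin.cons_self_tail _).symm,
      iteratedFDeriv_succ_apply_cons contDiff_gaussDensity, funext ih,
      ((hasFDerivAt_He_dotProduct_mul_gaussDensity n v y).const_mul _).fderiv]
    simp only [smul_apply, sub_apply, dotProductCLM_apply, hv, smul_eq_mul, mul_one, He_succ]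
    ring

end Gaussian

/-- Efficient tensor power iteration identity: for `x ∈ ℝ^d`, unit `v`, the Hermite tensor
`He_k(x) = ((−1)^k/γ_d(x)) ∇^k γ_d(x)` contracted with `v` in `k−1` slots satisfies
`He_k(x)[v^{⊗(k−1)}] = x · He_{k−1}(x·v) − (k−1) v · He_{k−2}(x·v)`; equivalently, pairing
with any `w` gives the stated scalar identity. -/
theorem stmt_16 (d k : ℕ) (hk : 1 ≤ k) (x v : Fin d → ℝ) (hv : ∑ i, (v i) ^ 2 = 1)
    (w : Fin d → ℝ) :
    ((-1 : ℝ) ^ k / gaussDensity d x) *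
      iteratedFDeriv ℝ k (gaussDensity d) x (fun i : Fin k => if (i : ℕ) = 0 then w else v)
    = (∑ i, x i * w i) * He (k - 1) (∑ i, x i * v i)
      - ((k : ℝ) - 1) * (∑ i, v i * w i) * He (k - 2) (∑ i, x i * v i) := by
  obtain ⟨n, rfl⟩ : ∃ n, k = n + 1 := ⟨k - 1, by omega⟩
  have hv' : v ⬝ᵥ v = 1 := by simpa [dotProduct, sq] using hv
  have hm : (fun i : Fin (n + 1) ↦ if (i : ℕ) = 0 then w else v) = Fin.cons w fun _ ↦ v := by
    funext i; cases i using Fin.cases <;> simp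
  rw [hm, iteratedFDeriv_succ_apply_cons contDiff_gaussDensity,
    funext (iteratedFDeriv_gaussDensity_apply_const hv' n),
    ((hasFDerivAt_He_dotProduct_mul_gaussDensity n v x).const_mul _).fderiv]
  have hγ := (gaussDensity_pos x).ne'
  simp only [smul_apply, sub_apply, dotProductCLM_apply, smul_eq_mul, Nat.add_sub_cancel,
    Nat.cast_succ, add_sub_cancel_right, pow_succ, show n + 1 - 2 = n - 1 by omega]
  field_simp
  rw [← pow_mul, pow_mul', neg_one_sq, one_pow]
  simp only [dotProduct]
  ring
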